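/- arXiv:2206.08646 — 2 statements merged into one kernel-verified Lean document; each statement's English description precedes it below -/
import Mathlib

section
/- For any ε > 0 and any points p, s in a metric space and any finite nonempty set T of points, |dist(p,T)² − dist(s,T)²| ≤ ε·dist(s,T)² + ((4+ε)/ε)·dist(p,s)², where dist(x,T) = min_{t∈T} dist(x,t). -/
/-- Generalized triangle inequality for squared distances: for any
`ε > 0`, points `p, s` in a metric space and a finite nonempty set `T`,
`|dist(p,T)² − dist(s,T)²| ≤ ε·dist(s,T)² + ((4+ε)/ε)·dist(p,s)²`, where
`dist(x,T) = min_{t ∈ T} dist(x,t)`. -/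
theorem generalized_triangle_sq {X : Type*} [MetricSpace X]
    (ε : ℝ) (hε : 0 < ε) (p s : X) (T : Finset X) (hT : T.Nonempty) :
    |(T.inf' hT fun t => dist p t) ^ 2 - (T.inf' hT fun t => dist s t) ^ 2|
      ≤ ε * (T.inf' hT fun t => dist s t) ^ 2 + (4 + ε) / ε * dist p s ^ 2 := by
  set a := T.inf' hT fun t => dist p t with ha
  set b := T.inf' hT fun t => dist s t with hb
  set d := dist p s with hd
  have ha0 : 0 ≤ a := by
    obtain ⟨t, ht, hbt⟩ := Finset.exists_mem_eq_inf' hT (fun t => dist p t)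
    rw [ha, hbt]; exact dist_nonneg
  have hb0 : 0 ≤ b := by
    obtain ⟨t, ht, hbt⟩ := Finset.exists_mem_eq_inf' hT (fun t => dist s t)
    rw [hb, hbt]; exact dist_nonneg
  have hd0 : 0 ≤ d := dist_nonneg
  have h1 : a ≤ b + d := by
    obtain ⟨t, ht, hbt⟩ := Finset.exists_mem_eq_inf' hT (fun t => dist s t)
    calc a ≤ dist p t := Finset.inf'_le _ ht
    _ ≤ dist p s + dist s t := dist_triangle _ _ _
    _ = b + d := by rw [hb, hbt, hd]; ring
  have h2 : b ≤ a + d := by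
    obtain ⟨t, ht, hbt⟩ := Finset.exists_mem_eq_inf' hT (fun t => dist p t)
    calc b ≤ dist s t := Finset.inf'_le _ ht
    _ ≤ dist s p + dist p t := dist_triangle _ _ _
    _ = a + d := by rw [ha, hbt, hd, dist_comm s p]; ring
  rw [abs_sub_le_iff]
  have key : ε * (d * (a + b)) ≤ ε * (ε * b ^ 2 + (4 + ε) / ε * d ^ 2) := by
    have hεne : ε ≠ 0 := ne_of_gt hε
    have : ε * ((4 + ε) / ε * d ^ 2) = (4 + ε) * d ^ 2 := by
      field_simp
    nlinarith [sq_nonneg (ε * b - d), sq_nonneg d, mul_nonneg hd0 hd0,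
      mul_le_mul_of_nonneg_left h1 (mul_nonneg hε.le hd0), sq_nonneg (ε * b)]
  have key' : d * (a + b) ≤ ε * b ^ 2 + (4 + ε) / ε * d ^ 2 :=
    le_of_mul_le_mul_left key hε
  constructor <;> nlinarith [mul_le_mul_of_nonneg_left h1 (add_nonneg ha0 hb0),
    mul_le_mul_of_nonneg_left h2 (add_nonneg ha0 hb0)]
end

section
/- Let (P, dist) be a metric space, X a finite multiset of points, S a set of centers inducing a map assigning each p ∈ X to s(p) ∈ S, and P_S the weighted instance where each s ∈ S has weight equal to the number of points assigned to it. Then for any finite nonempty set T of centers and any ε ∈ (0,1): |cost(X,T) − cost(P_S,T)| ≤ ε·cost(P_S,T) + ((4+ε)/ε)·cost(X,S), where cost(X,T) = Σ_{p∈X} dist(p,T)², cost(P_S,T) = Σ_{p∈X} dist(s(p),T)², and cost(X,S) = Σ_{p∈X} dist(p,s(p))². -/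
private lemma ptwise (a b c ε : ℝ) (ha : 0 ≤ a) (hb : 0 ≤ b) (hc : 0 ≤ c)
    (hab : |a - b| ≤ c) (hε0 : 0 < ε) :
    |a ^ 2 - b ^ 2| ≤ ε * b ^ 2 + (4 + ε) / ε * c ^ 2 := by
  rw [abs_le] at hab ⊢
  have h1 := hab.1
  have h2 := hab.2
  have hK : (4 + ε) / ε * ε = 4 + ε := div_mul_cancel₀ _ hε0.ne'
  have key : 2 * b * c + c ^ 2 ≤ ε * b ^ 2 + (4 + ε) / ε * c ^ 2 := by
    nlinarith [sq_nonneg (ε * b - c), sq_nonneg c, hε0, hK, mul_pos hε0 hε0]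
  constructor
  · have hba : b - a ≤ c := by linarith
    have h3 : (b - a) * (b + a) ≤ c * (b + a) :=
      mul_le_mul_of_nonneg_right hba (by linarith)
    have h4 : c * (b + a) ≤ c * (2 * b + c) :=
      mul_le_mul_of_nonneg_left (by linarith) hc
    nlinarith
  · have hab' : a - b ≤ c := h2
    have h3 : (a - b) * (a + b) ≤ c * (a + b) :=
      mul_le_mul_of_nonneg_right hab' (by linarith)
    have h4 : c * (a + b) ≤ c * (2 * b + c) :=
      mul_le_mul_of_nonneg_left (by linarith) hc
    nlinarith

private lemma inf'_dist_lip {P : Type*} [MetricSpace P] (T : Finset P) (hT : T.Nonempty)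
    (x y : P) :
    |(T.inf' hT fun t => dist x t) - (T.inf' hT fun t => dist y t)| ≤ dist x y := by
  rw [abs_le]
  constructor
  · obtain ⟨t, ht, h⟩ := T.exists_mem_eq_inf' hT (fun t => dist x t)
    have h2 : (T.inf' hT fun t => dist y t) ≤ dist y t := Finset.inf'_le _ ht
    have := dist_triangle y x t
    rw [dist_comm y x] at this
    linarith [h ▸ (le_refl (T.inf' hT fun t => dist x t))]
  · obtain ⟨t, ht, h⟩ := T.exists_mem_eq_inf' hT (fun t => dist y t)
    have h2 : (T.inf' hT fun t => dist x t) ≤ dist x t := Finset.inf'_le _ ht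
    have := dist_triangle x y t
    linarith [h ▸ (le_refl (T.inf' hT fun t => dist y t))]

theorem weighted_instance_cost {P : Type*} [MetricSpace P]
    (Xs : Multiset P) (s : P → P) (S : Finset P) (hs : ∀ p ∈ Xs, s p ∈ S)
    (T : Finset P) (hT : T.Nonempty) (ε : ℝ) (hε0 : 0 < ε) (hε1 : ε < 1) :
    |(Xs.map fun p => (T.inf' hT fun t => dist p t) ^ 2).sum -
        (Xs.map fun p => (T.inf' hT fun t => dist (s p) t) ^ 2).sum|
      ≤ ε * (Xs.map fun p => (T.inf' hT fun t => dist (s p) t) ^ 2).sum +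
        (4 + ε) / ε * (Xs.map fun p => dist p (s p) ^ 2).sum := by
  clear hs hε1
  induction Xs using Multiset.induction_on with
  | empty => simp
  | cons p X ih =>
    simp only [Multiset.map_cons, Multiset.sum_cons]
    have ha : 0 ≤ T.inf' hT fun t => dist p t := by
      obtain ⟨t, ht, h⟩ := T.exists_mem_eq_inf' hT (fun t => dist p t)
      rw [h]; exact dist_nonneg
    have hb : 0 ≤ T.inf' hT fun t => dist (s p) t := by
      obtain ⟨t, ht, h⟩ := T.exists_mem_eq_inf' hT (fun t => dist (s p) t)
      rw [h]; exact dist_nonneg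
    have hpt := ptwise _ _ _ ε ha hb dist_nonneg (inf'_dist_lip T hT p (s p)) hε0
    calc |((T.inf' hT fun t => dist p t) ^ 2 + (Multiset.map (fun p => (T.inf' hT fun t => dist p t) ^ 2) X).sum) -
          ((T.inf' hT fun t => dist (s p) t) ^ 2 + (Multiset.map (fun p => (T.inf' hT fun t => dist (s p) t) ^ 2) X).sum)|
        ≤ |(T.inf' hT fun t => dist p t) ^ 2 - (T.inf' hT fun t => dist (s p) t) ^ 2| +
          |(Multiset.map (fun p => (T.inf' hT fun t => dist p t) ^ 2) X).sum -
           (Multiset.map (fun p => (T.inf' hT fun t => dist (s p) t) ^ 2) X).sum| := by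
          rw [add_sub_add_comm]; exact abs_add_le _ _
      _ ≤ _ := by
          have := ih
          rw [mul_add, mul_add]
          linarith
end
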